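/- arXiv:1010.4672 — 2 statements merged into one kernel-verified Lean document; each statement's English description precedes it below -/
import Mathlib

section
/- With T₁ ∼_ε T₂, let S*_{2,Eε} be a time-optimal controller for T₂ and specification (E_ε(O_s), E_ε(O_t)), and let S_{1,E2ε} be its concretization via argmin over R of J*(T₂, E_ε(O_s), E_ε(O_t), ·). Then for all q₁: J*(T₁, E_{2ε}(O_s), E_{2ε}(O_t), q₁) ≤ J(T_{1,S_{1,E2ε}}, E_{2ε}(O_s), E_{2ε}(O_t), q₁) ≤ J*(T₁, O_s, O_t, q₁). -/
open Set

/-- φ-contraction of a set in a metric space. -/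
def contr {O : Type*} [MetricSpace O] (φ : ℝ) (s : Set O) : Set O :=
  {o' | o' ∈ s ∧ ∀ o : O, dist o o' ≤ φ → o ∈ s}

/-- φ-expansion of a set in a metric space. -/
def expan {O : Type*} [MetricSpace O] (φ : ℝ) (s : Set O) : Set O :=
  {o : O | ∃ o' ∈ s, dist o o' ≤ φ}

/-- Enabled actions of a transition system given by δ. -/
def Enab {Q L : Type*} (δ : Q → L → Set Q) (q : Q) : Set L := {l | (δ q l).Nonempty}

/-- A trajectory of length N of the controlled system T_S. -/
def IsTraj {Q L : Type*} (δ : Q → L → Set Q) (S : Q → Set L) (N : ℕ)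
    (q : ℕ → Q) (l : ℕ → L) : Prop :=
  ∀ i < N, l i ∈ S (q i) ∧ q (i + 1) ∈ δ (q i) (l i)

/-- ε-approximate bisimulation relation. -/
def ApproxBisim {Q₁ Q₂ L O : Type*} [MetricSpace O] (ε : ℝ)
    (δ₁ : Q₁ → L → Set Q₁) (H₁ : Q₁ → O)
    (δ₂ : Q₂ → L → Set Q₂) (H₂ : Q₂ → O) (R : Set (Q₁ × Q₂)) : Prop :=
  ∀ p ∈ R, dist (H₁ p.1) (H₂ p.2) ≤ ε ∧
    (∀ l : L, ∀ q₁' ∈ δ₁ p.1 l, ∃ q₂' ∈ δ₂ p.2 l, (q₁', q₂') ∈ R) ∧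
    (∀ l : L, ∀ q₂' ∈ δ₂ p.2 l, ∃ q₁' ∈ δ₁ p.1 l, (q₁', q₂') ∈ R)

/-- Safety controller (characterization of Lemma 3.1). -/
def SafetyController {Q L O : Type*} (δ : Q → L → Set Q) (H : Q → O)
    (S : Q → Set L) (Os : Set O) : Prop :=
  ∀ q : Q, (S q).Nonempty → H q ∈ Os ∧ ∀ l ∈ S q, ∀ q' ∈ δ q l, (S q').Nonempty

/-- The reachability condition on a trajectory of length N. -/
def Reached {Q O : Type*} (H : Q → O) (Os Ot : Set O) (N : ℕ) (q : ℕ → Q) : Prop :=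
  ∃ K ≤ N, (∀ k ≤ K, H (q k) ∈ Os) ∧ H (q K) ∈ Ot

/-- Entry time of the controlled system T_S from q₀ for specification (Os, Ot). -/
noncomputable def entryTime {Q L O : Type*} (δ : Q → L → Set Q) (S : Q → Set L)
    (H : Q → O) (Os Ot : Set O) (q₀ : Q) : ℕ∞ :=
  sInf {n : ℕ∞ | ∃ N : ℕ, n = (N : ℕ∞) ∧
    ∀ (q : ℕ → Q) (l : ℕ → L), q 0 = q₀ → IsTraj δ S N q l → Reached H Os Ot N q}

/-- An everywhere non-empty, well-defined controller. -/
def IsController {Q L : Type*} (δ : Q → L → Set Q) (S : Q → Set L) : Prop :=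
  (∀ q, (S q).Nonempty) ∧ ∀ q, S q ⊆ Enab δ q

/-- Time-optimal controller for reachability specification (Os, Ot). -/
def TimeOptimal {Q L O : Type*} (δ : Q → L → Set Q) (H : Q → O) (S : Q → Set L)
    (Os Ot : Set O) : Prop :=
  IsController δ S ∧ ∀ S' : Q → Set L, IsController δ S' →
    ∀ q, entryTime δ S H Os Ot q ≤ entryTime δ S' H Os Ot q

/-- Maximal safety controller. -/
def MaximalSafety {Q L O : Type*} (δ : Q → L → Set Q) (H : Q → O) (S : Q → Set L)
    (Os : Set O) : Prop :=
  SafetyController δ H S Os ∧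
    ∀ S' : Q → Set L, SafetyController δ H S' Os → ∀ q, S' q ⊆ S q

/-- ε-approximate bisimilarity of two transition systems. -/
def ApproxBisimilar {Q₁ Q₂ L O : Type*} [MetricSpace O] (ε : ℝ)
    (δ₁ : Q₁ → L → Set Q₁) (H₁ : Q₁ → O)
    (δ₂ : Q₂ → L → Set Q₂) (H₂ : Q₂ → O) : Prop :=
  ∃ R : Set (Q₁ × Q₂), ApproxBisim ε δ₁ H₁ δ₂ H₂ R ∧
    (∀ q₁, ∃ q₂, (q₁, q₂) ∈ R) ∧ (∀ q₂, ∃ q₁, (q₁, q₂) ∈ R)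


/-- All trajectories of length N from x reach. -/
def AllReach {Q L O : Type*} (δ : Q → L → Set Q) (S : Q → Set L) (H : Q → O)
    (Os Ot : Set O) (x : Q) (N : ℕ) : Prop :=
  ∀ (q : ℕ → Q) (l : ℕ → L), q 0 = x → IsTraj δ S N q l → Reached H Os Ot N q

lemma entryTime_eq {Q L O : Type*} (δ : Q → L → Set Q) (S : Q → Set L)
    (H : Q → O) (Os Ot : Set O) (x : Q) :
    entryTime δ S H Os Ot x =
      sInf {n : ℕ∞ | ∃ N : ℕ, n = (N : ℕ∞) ∧ AllReach δ S H Os Ot x N} := rfl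

lemma AllReach.mono {Q L O : Type*} {δ : Q → L → Set Q} {S : Q → Set L} {H : Q → O}
    {Os Ot : Set O} {x : Q} {M N : ℕ} (h : AllReach δ S H Os Ot x M) (hMN : M ≤ N) :
    AllReach δ S H Os Ot x N := by
  intro q l hq0 htraj
  obtain ⟨K, hK, hOs, hOt⟩ := h q l hq0 (fun i hi => htraj i (lt_of_lt_of_le hi hMN))
  exact ⟨K, hK.trans hMN, hOs, hOt⟩

lemma entryTime_le_of_allReach {Q L O : Type*} {δ : Q → L → Set Q} {S : Q → Set L}
    {H : Q → O} {Os Ot : Set O} {x : Q} {N : ℕ} (h : AllReach δ S H Os Ot x N) :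
    entryTime δ S H Os Ot x ≤ (N : ℕ∞) := by
  rw [entryTime_eq]; exact sInf_le ⟨N, rfl, h⟩

lemma allReach_of_entryTime_le {Q L O : Type*} {δ : Q → L → Set Q} {S : Q → Set L}
    {H : Q → O} {Os Ot : Set O} {x : Q} {N : ℕ}
    (h : entryTime δ S H Os Ot x ≤ (N : ℕ∞)) : AllReach δ S H Os Ot x N := by
  by_contra hco
  have h2 : ((N : ℕ∞) + 1) ≤ entryTime δ S H Os Ot x := by
    rw [entryTime_eq]
    refine le_sInf ?_
    rintro b ⟨M, rfl, hM⟩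
    have hNM : N + 1 ≤ M := by
      by_contra hlt
      exact hco (hM.mono (by omega))
    calc ((N : ℕ∞) + 1) = ((N + 1 : ℕ) : ℕ∞) := by push_cast; ring
      _ ≤ (M : ℕ∞) := by exact_mod_cast hNM
  have := h2.trans h
  have : (N : ℕ∞) + 1 ≤ (N : ℕ∞) := this
  have hlt : (N : ℕ∞) < (N : ℕ∞) + 1 := by
    refine lt_of_lt_of_le ?_ (le_refl _)
    exact_mod_cast (by omega : N < N + 1)
  exact absurd this (not_le.mpr (by exact_mod_cast (by omega : N < N + 1)))

lemma exists_traj {Q L : Type*} {δ : Q → L → Set Q} {S : Q → Set L}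
    (hS : IsController δ S) (x : Q) :
    ∃ (q : ℕ → Q) (l : ℕ → L), q 0 = x ∧ ∀ i, l i ∈ S (q i) ∧ q (i + 1) ∈ δ (q i) (l i) := by
  choose f hf using hS.1
  have hen : ∀ q, (δ q (f q)).Nonempty := fun q => hS.2 q (hf q)
  choose g hg using hen
  refine ⟨fun n => Nat.rec x (fun _ q => g q) n,
    fun n => f (Nat.rec x (fun _ q => g q) n), rfl, fun i => ⟨hf _, hg _⟩⟩

/-- Key transfer lemma: a concretized controller inherits reachability
(with the transferred specification) from the abstract system. -/
lemma gen_transfer {QA QB L O : Type*}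
    (δA : QA → L → Set QA) (HA : QA → O) (δB : QB → L → Set QB) (HB : QB → O)
    (R' : Set (QA × QB))
    (hfwd : ∀ p ∈ R', ∀ l : L, ∀ qa' ∈ δA p.1 l, ∃ qb' ∈ δB p.2 l, (qa', qb') ∈ R')
    (SB : QB → Set L) (hSB : IsController δB SB)
    (OsB OtB OsA OtA : Set O)
    (htOs : ∀ p ∈ R', HB p.2 ∈ OsB → HA p.1 ∈ OsA)
    (htOt : ∀ p ∈ R', HB p.2 ∈ OtB → HA p.1 ∈ OtA)
    (c : QA → QB) (hcR : ∀ qa, (qa, c qa) ∈ R')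
    (hcmin : ∀ qa qb, (qa, qb) ∈ R' →
      entryTime δB SB HB OsB OtB (c qa) ≤ entryTime δB SB HB OsB OtB qb) :
    ∀ N : ℕ, ∀ qa qb, (qa, qb) ∈ R' →
      AllReach δB SB HB OsB OtB qb N →
      AllReach δA (fun q => SB (c q)) HA OsA OtA qa N := by
  intro N
  induction N with
  | zero =>
    intro qa qb hab hreach q l hq0 _
    -- transfer via minimality to c qa
    have hVc : entryTime δB SB HB OsB OtB (c qa) ≤ (0 : ℕ∞) := by
      exact (hcmin qa qb hab).trans (by exact_mod_cast entryTime_le_of_allReach hreach)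
    have hreach' : AllReach δB SB HB OsB OtB (c qa) 0 := by
      have := allReach_of_entryTime_le (x := c qa) (N := 0) (by exact_mod_cast hVc)
      exact this
    obtain ⟨p, m, hp0, hpm⟩ := exists_traj hSB (c qa)
    obtain ⟨K, hK, hOs, hOt⟩ := hreach' p m hp0 (fun i hi => absurd hi (by omega))
    have hK0 : K = 0 := Nat.le_zero.mp hK
    subst hK0
    rw [hp0] at hOt
    refine ⟨0, le_refl _, ?_, hq0 ▸ htOt _ (hcR qa) hOt⟩
    intro k hk
    have hk0 : k = 0 := Nat.le_zero.mp hk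
    subst hk0
    rw [hq0]
    exact htOs _ (hcR qa) (hp0 ▸ hOs 0 (le_refl _))
  | succ n ih =>
    intro qa qb hab hreach
    have hVc : entryTime δB SB HB OsB OtB (c qa) ≤ ((n + 1 : ℕ) : ℕ∞) :=
      (hcmin qa qb hab).trans (entryTime_le_of_allReach hreach)
    have hreach' : AllReach δB SB HB OsB OtB (c qa) (n + 1) :=
      allReach_of_entryTime_le hVc
    -- there is a full trajectory from c qa, giving HB (c qa) ∈ OsB
    obtain ⟨p, m, hp0, hpm⟩ := exists_traj hSB (c qa)
    obtain ⟨K, hK, hOsK, hOtK⟩ := hreach' p m hp0 (fun i _ => hpm i)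
    have hOsB : HB (c qa) ∈ OsB := hp0 ▸ hOsK 0 (Nat.zero_le K)
    have hOsA : HA qa ∈ OsA := htOs _ (hcR qa) hOsB
    by_cases hT : HB (c qa) ∈ OtB
    · intro q l hq0 _
      refine ⟨0, Nat.zero_le _, ?_, hq0 ▸ htOt _ (hcR qa) hT⟩
      intro k hk
      have hk0 : k = 0 := Nat.le_zero.mp hk
      subst hk0
      rw [hq0]; exact hOsA
    · intro q l hq0 htraj
      have hstep := htraj 0 (Nat.succ_pos n)
      rw [hq0] at hstep
      obtain ⟨qb', hqb'δ, hqb'R⟩ :=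
        hfwd (qa, c qa) (hcR qa) (l 0) (q 1) hstep.2
      have hreachb' : AllReach δB SB HB OsB OtB qb' n := by
        intro p' m' hp'0 htr'
        set pp : ℕ → QB := fun i => Nat.rec (c qa) (fun j _ => p' j) i with hpp
        set mm : ℕ → L := fun i => Nat.rec (l 0) (fun j _ => m' j) i with hmm
        have htrpp : IsTraj δB SB (n + 1) pp mm := by
          intro i hi
          cases i with
          | zero =>
            refine ⟨hstep.1, ?_⟩
            show p' 0 ∈ δB (c qa) (l 0)
            rw [hp'0]; exact hqb'δ
          | succ j =>
            have hj : j < n := by omega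
            exact htr' j hj
        obtain ⟨K, hK, hOs, hOt⟩ := hreach' pp mm rfl htrpp
        cases K with
        | zero => exact absurd hOt hT
        | succ K' =>
          refine ⟨K', by omega, ?_, hOt⟩
          intro k hk
          exact hOs (k + 1) (by omega)
      have hconcl := ih (q 1) qb' hqb'R hreachb'
      have hsh : IsTraj δA (fun x => SB (c x)) n (fun i => q (i + 1)) (fun i => l (i + 1)) :=
        fun i hi => htraj (i + 1) (by omega)
      obtain ⟨K', hK', hOs', hOt'⟩ := hconcl _ _ rfl hsh
      refine ⟨K' + 1, by omega, ?_, hOt'⟩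
      intro k hk
      cases k with
      | zero => rw [hq0]; exact hOsA
      | succ j => exact hOs' j (by omega)


theorem suboptimality_expansion {Q₁ Q₂ L O : Type*} [MetricSpace O]
    (ε : ℝ) (hε : 0 ≤ ε) (δ₁ : Q₁ → L → Set Q₁) (H₁ : Q₁ → O)
    (δ₂ : Q₂ → L → Set Q₂) (H₂ : Q₂ → O) (R : Set (Q₁ × Q₂))
    (hR : ApproxBisim ε δ₁ H₁ δ₂ H₂ R)
    (hRtot₁ : ∀ q₁, ∃ q₂, (q₁, q₂) ∈ R) (hRtot₂ : ∀ q₂, ∃ q₁, (q₁, q₂) ∈ R)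
    (hnb₁ : ∀ q : Q₁, ∃ l : L, (δ₁ q l).Nonempty)
    (hnb₂ : ∀ q : Q₂, ∃ l : L, (δ₂ q l).Nonempty)
    (Os Ot : Set O) (hOts : Ot ⊆ Os)
    (S₂ : Q₂ → Set L) (hS₂ : TimeOptimal δ₂ H₂ S₂ (expan ε Os) (expan ε Ot))
    (c : Q₁ → Q₂)
    (hc : ∀ q₁, (q₁, c q₁) ∈ R ∧ ∀ q₂, (q₁, q₂) ∈ R →
      entryTime δ₂ S₂ H₂ (expan ε Os) (expan ε Ot) (c q₁) ≤
      entryTime δ₂ S₂ H₂ (expan ε Os) (expan ε Ot) q₂)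
    (Sopt : Q₁ → Set L) (hSopt : TimeOptimal δ₁ H₁ Sopt Os Ot)
    (SoptE2 : Q₁ → Set L)
    (hSoptE2 : TimeOptimal δ₁ H₁ SoptE2 (expan (2 * ε) Os) (expan (2 * ε) Ot)) :
    ∀ q₁ : Q₁,
      entryTime δ₁ SoptE2 H₁ (expan (2 * ε) Os) (expan (2 * ε) Ot) q₁ ≤
        entryTime δ₁ (fun q => S₂ (c q)) H₁ (expan (2 * ε) Os) (expan (2 * ε) Ot) q₁ ∧
      entryTime δ₁ (fun q => S₂ (c q)) H₁ (expan (2 * ε) Os) (expan (2 * ε) Ot) q₁ ≤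
        entryTime δ₁ Sopt H₁ Os Ot q₁ := by
  intro q₁
  -- the concretized controller is a controller on T₁
  have hctrl : IsController δ₁ (fun q => S₂ (c q)) := by
    constructor
    · exact fun q => hS₂.1.1 (c q)
    · intro q l hl
      have h2 : (δ₂ (c q) l).Nonempty := hS₂.1.2 (c q) hl
      obtain ⟨q₂', hq₂'⟩ := h2
      obtain ⟨q₁', hq₁', _⟩ := (hR _ (hc q).1).2.2 l q₂' hq₂'
      exact ⟨q₁', hq₁'⟩
  constructor
  · exact hSoptE2.2 _ hctrl q₁
  · -- reverse argmin function c' : Q₂ → Q₁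
    have hcex : ∀ q₂ : Q₂, ∃ q₁', (q₁', q₂) ∈ R ∧ ∀ q₁'', (q₁'', q₂) ∈ R →
        entryTime δ₁ Sopt H₁ Os Ot q₁' ≤ entryTime δ₁ Sopt H₁ Os Ot q₁'' := by
      intro q₂
      obtain ⟨q₁', hq₁'⟩ := hRtot₂ q₂
      have hne : ((fun a => entryTime δ₁ Sopt H₁ Os Ot a) ''
          {a | (a, q₂) ∈ R}).Nonempty := ⟨_, ⟨q₁', hq₁', rfl⟩⟩
      obtain ⟨v, ⟨a, ha, hva⟩, hmin⟩ := WellFounded.has_min wellFounded_lt _ hne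
      refine ⟨a, ha, fun b hb => ?_⟩
      rw [show entryTime δ₁ Sopt H₁ Os Ot a = v from hva]
      exact not_lt.mp (hmin _ ⟨b, hb, rfl⟩)
    choose c' hc'R hc'min using hcex
    -- swapped relation
    set R' : Set (Q₂ × Q₁) := {p | (p.2, p.1) ∈ R} with hR'def
    have hfwd' : ∀ p ∈ R', ∀ l : L, ∀ qa' ∈ δ₂ p.1 l, ∃ qb' ∈ δ₁ p.2 l, (qa', qb') ∈ R' :=
      fun p hp l qa' hqa' => by
        obtain ⟨qb', hqb', hrel⟩ := (hR _ hp).2.2 l qa' hqa'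
        exact ⟨qb', hqb', hrel⟩
    have htOs' : ∀ p ∈ R', H₁ p.2 ∈ Os → H₂ p.1 ∈ expan ε Os := by
      intro p hp h
      exact ⟨H₁ p.2, h, by rw [dist_comm]; exact (hR _ hp).1⟩
    have htOt' : ∀ p ∈ R', H₁ p.2 ∈ Ot → H₂ p.1 ∈ expan ε Ot := by
      intro p hp h
      exact ⟨H₁ p.2, h, by rw [dist_comm]; exact (hR _ hp).1⟩
    -- Sopt ∘ c' is a controller on T₂
    have hctrl' : IsController δ₂ (fun q => Sopt (c' q)) := by
      constructor
      · exact fun q => hSopt.1.1 (c' q)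
      · intro q l hl
        have h1 : (δ₁ (c' q) l).Nonempty := hSopt.1.2 (c' q) hl
        obtain ⟨x, hx⟩ := h1
        obtain ⟨y, hy, _⟩ := (hR _ (hc'R q)).2.1 l x hx
        exact ⟨y, hy⟩
    have hA' := gen_transfer δ₂ H₂ δ₁ H₁ R' hfwd' Sopt hSopt.1 Os Ot
      (expan ε Os) (expan ε Ot) htOs' htOt' c' hc'R
      (fun qa qb hab => hc'min qa qb hab)
    -- forward transfer data for R
    have hfwd : ∀ p ∈ R, ∀ l : L, ∀ qa' ∈ δ₁ p.1 l, ∃ qb' ∈ δ₂ p.2 l, (qa', qb') ∈ R :=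
      fun p hp l => (hR _ hp).2.1 l
    have htOs : ∀ p ∈ R, H₂ p.2 ∈ expan ε Os → H₁ p.1 ∈ expan (2 * ε) Os := by
      rintro p hp ⟨o, ho, hdo⟩
      refine ⟨o, ho, ?_⟩
      have := (hR _ hp).1
      calc dist (H₁ p.1) o ≤ dist (H₁ p.1) (H₂ p.2) + dist (H₂ p.2) o := dist_triangle _ _ _
        _ ≤ 2 * ε := by linarith
    have htOt : ∀ p ∈ R, H₂ p.2 ∈ expan ε Ot → H₁ p.1 ∈ expan (2 * ε) Ot := by
      rintro p hp ⟨o, ho, hdo⟩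
      refine ⟨o, ho, ?_⟩
      have := (hR _ hp).1
      calc dist (H₁ p.1) o ≤ dist (H₁ p.1) (H₂ p.2) + dist (H₂ p.2) o := dist_triangle _ _ _
        _ ≤ 2 * ε := by linarith
    have hA := gen_transfer δ₁ H₁ δ₂ H₂ R hfwd S₂ hS₂.1
      (expan ε Os) (expan ε Ot) (expan (2 * ε) Os) (expan (2 * ε) Ot) htOs htOt
      c (fun q => (hc q).1) (fun qa qb hab => (hc qa).2 qb hab)
    -- main inequality
    rw [entryTime_eq δ₁ Sopt]
    refine le_sInf ?_
    rintro b ⟨N, rfl, hN⟩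
    -- step 1: abstract optimal reaches expanded spec from c q₁ in horizon N
    have h1 : AllReach δ₂ (fun q => Sopt (c' q)) H₂ (expan ε Os) (expan ε Ot) (c q₁) N :=
      hA' N (c q₁) q₁ ((hc q₁).1) hN
    have h2 : entryTime δ₂ S₂ H₂ (expan ε Os) (expan ε Ot) (c q₁) ≤ (N : ℕ∞) :=
      le_trans (hS₂.2 _ hctrl' (c q₁)) (entryTime_le_of_allReach h1)
    have h3 : AllReach δ₂ S₂ H₂ (expan ε Os) (expan ε Ot) (c q₁) N :=
      allReach_of_entryTime_le h2
    have h4 := hA N q₁ (c q₁) ((hc q₁).1) h3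
    exact entryTime_le_of_allReach h4
end

section
/- If q₁ is a state of T₁ with finite entry time under the concretized controller S₁ in the sense of Theorem 4.1, i.e., min_{q₂ ∈ R(q₁)} J(T_{2,S_{2,Cε}}, C_ε(O_s), C_ε(O_t), q₂) < ∞, then every maximal run of the controlled system T_{1,S₁} from q₁ reaches a state with output in O_t within that many steps while keeping its output in O_s until then. -/
open Set

section Aux

variable {Q L O : Type*}

/-- If the entry time is at most `n`, then every length-`n` trajectory reaches. -/
lemma entryTime_le_elim (δ : Q → L → Set Q) (S : Q → Set L) (H : Q → O)
    (Os Ot : Set O) (q₀ : Q) (n : ℕ)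
    (h : entryTime δ S H Os Ot q₀ ≤ (n : ℕ∞)) :
    ∀ (q : ℕ → Q) (l : ℕ → L), q 0 = q₀ → IsTraj δ S n q l → Reached H Os Ot n q := by
  have hlt : entryTime δ S H Os Ot q₀ < ((n + 1 : ℕ) : ℕ∞) := by
    refine lt_of_le_of_lt h ?_
    exact_mod_cast Nat.lt_succ_self n
  rw [entryTime] at hlt
  obtain ⟨a, ha, halt⟩ := sInf_lt_iff.mp hlt
  obtain ⟨m, rfl, hm⟩ := ha
  have hmn : m ≤ n := by
    have : m < n + 1 := by exact_mod_cast halt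
    omega
  intro q l hq0 htraj
  have : IsTraj δ S m q l := fun i hi => htraj i (lt_of_lt_of_le hi hmn)
  obtain ⟨K, hK, hsafe, htgt⟩ := hm q l hq0 this
  exact ⟨K, le_trans hK hmn, hsafe, htgt⟩

/-- There exist trajectories of every length from every state, for a
nonempty well-defined controller. -/
lemma exists_traj_s17 (δ : Q → L → Set Q) (S : Q → Set L)
    (hne : ∀ q, (S q).Nonempty) (hwd : ∀ q, S q ⊆ Enab δ q) (q₀ : Q) (n : ℕ) :
    ∃ (q : ℕ → Q) (l : ℕ → L), q 0 = q₀ ∧ IsTraj δ S n q l := by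
  have step : ∀ p : Q, ∃ (l : L) (q' : Q), l ∈ S p ∧ q' ∈ δ p l := by
    intro p
    obtain ⟨l, hl⟩ := hne p
    obtain ⟨q', hq'⟩ := hwd p hl
    exact ⟨l, q', hl, hq'⟩
  choose lf qf hlf hqf using step
  refine ⟨fun k => Nat.rec q₀ (fun _ p => qf p) k,
    fun k => lf (Nat.rec q₀ (fun _ p => qf p) k), rfl, ?_⟩
  intro i _
  exact ⟨hlf _, hqf _⟩

end Aux

theorem finite_entry_time_reaches {Q₁ Q₂ L O : Type*} [MetricSpace O]
    (ε : ℝ) (hε : 0 ≤ ε) (δ₁ : Q₁ → L → Set Q₁) (H₁ : Q₁ → O)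
    (δ₂ : Q₂ → L → Set Q₂) (H₂ : Q₂ → O) (R : Set (Q₁ × Q₂))
    (hR : ApproxBisim ε δ₁ H₁ δ₂ H₂ R)
    (hRtot₁ : ∀ q₁, ∃ q₂, (q₁, q₂) ∈ R) (hRtot₂ : ∀ q₂, ∃ q₁, (q₁, q₂) ∈ R)
    (hnb₁ : ∀ q : Q₁, ∃ l : L, (δ₁ q l).Nonempty)
    (hnb₂ : ∀ q : Q₂, ∃ l : L, (δ₂ q l).Nonempty)
    (Os Ot : Set O) (hOts : Ot ⊆ Os)
    (S₂ : Q₂ → Set L) (hS₂ne : ∀ q₂, (S₂ q₂).Nonempty)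
    (hS₂wd : ∀ q₂, S₂ q₂ ⊆ Enab δ₂ q₂)
    (c : Q₁ → Q₂)
    (hc : ∀ q₁, (q₁, c q₁) ∈ R ∧ ∀ q₂, (q₁, q₂) ∈ R →
      entryTime δ₂ S₂ H₂ (contr ε Os) (contr ε Ot) (c q₁) ≤
      entryTime δ₂ S₂ H₂ (contr ε Os) (contr ε Ot) q₂)
    (q₁ : Q₁)
    (hfin : (⨅ q₂ ∈ {q₂ : Q₂ | (q₁, q₂) ∈ R},
      entryTime δ₂ S₂ H₂ (contr ε Os) (contr ε Ot) q₂) ≠ ⊤) :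
    ∀ N : ℕ, (⨅ q₂ ∈ {q₂ : Q₂ | (q₁, q₂) ∈ R},
        entryTime δ₂ S₂ H₂ (contr ε Os) (contr ε Ot) q₂) ≤ (N : ℕ∞) →
      ∀ (q : ℕ → Q₁) (l : ℕ → L), q 0 = q₁ →
        IsTraj δ₁ (fun p => S₂ (c p)) N q l → Reached H₁ Os Ot N q := by
  classical
  set Cs := contr ε Os with hCs
  set Ct := contr ε Ot with hCt
  set E : Q₂ → ℕ∞ := entryTime δ₂ S₂ H₂ Cs Ct with hE
  -- safety fact: finite entry time implies current output is in the contracted safe set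
  have safe2 : ∀ (p : Q₂) (n : ℕ), E p ≤ (n : ℕ∞) → H₂ p ∈ Cs := by
    intro p n hp
    obtain ⟨r, m, hr0, hrtraj⟩ := exists_traj_s17 δ₂ S₂ hS₂ne hS₂wd p n
    obtain ⟨K, hK, hsafe, htgt⟩ := entryTime_le_elim δ₂ S₂ H₂ Cs Ct p n hp r m hr0 hrtraj
    have := hsafe 0 (Nat.zero_le K)
    rwa [hr0] at this
  have pull : ∀ (p : Q₁) (p₂ : Q₂) (s : Set O), (p, p₂) ∈ R → H₂ p₂ ∈ contr ε s → H₁ p ∈ s := by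
    intro p p₂ s hmem hcs
    exact hcs.2 (H₁ p) ((hR (p, p₂) hmem).1)
  -- main induction
  have key : ∀ n : ℕ, ∀ q₀ : Q₁, E (c q₀) ≤ (n : ℕ∞) →
      ∀ (q : ℕ → Q₁) (l : ℕ → L), q 0 = q₀ →
        IsTraj δ₁ (fun p => S₂ (c p)) n q l → Reached H₁ Os Ot n q := by
    intro n
    induction n with
    | zero =>
      intro q₀ h q l hq0 _
      obtain ⟨r, m, hr0, hrtraj⟩ := exists_traj_s17 δ₂ S₂ hS₂ne hS₂wd (c q₀) 0
      obtain ⟨K, hK, hsafe, htgt⟩ :=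
        entryTime_le_elim δ₂ S₂ H₂ Cs Ct (c q₀) 0 h r m hr0 hrtraj
      have hK0 : K = 0 := Nat.le_zero.mp hK
      subst hK0
      rw [hr0] at htgt
      have ht1 : H₁ q₀ ∈ Ot := pull q₀ (c q₀) Ot (hc q₀).1 htgt
      refine ⟨0, le_refl 0, ?_, ?_⟩
      · intro k hk
        have : k = 0 := Nat.le_zero.mp hk
        subst this
        rw [hq0]; exact hOts ht1
      · rw [hq0]; exact ht1
    | succ n ih =>
      intro q₀ h q l hq0 htraj
      by_cases ht : H₂ (c q₀) ∈ Ct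
      · have ht1 : H₁ q₀ ∈ Ot := pull q₀ (c q₀) Ot (hc q₀).1 ht
        refine ⟨0, Nat.zero_le _, ?_, ?_⟩
        · intro k hk
          have : k = 0 := Nat.le_zero.mp hk
          subst this
          rw [hq0]; exact hOts ht1
        · rw [hq0]; exact ht1
      · have h0 := htraj 0 (Nat.succ_pos n)
        rw [hq0] at h0
        obtain ⟨hd, hfwd, _⟩ := hR (q₀, c q₀) (hc q₀).1
        obtain ⟨p', hp'δ, hp'R⟩ := hfwd (l 0) (q 1) h0.2
        -- entry time of p' is at most n
        have hEp' : E p' ≤ (n : ℕ∞) := by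
          apply sInf_le
          refine ⟨n, rfl, ?_⟩
          intro r m hr0 hrtraj
          -- prepend (c q₀, l 0) to the trajectory r
          set r' : ℕ → Q₂ := fun i => Nat.rec (c q₀) (fun j _ => r j) i with hr'
          set m' : ℕ → L := fun i => Nat.rec (l 0) (fun j _ => m j) i with hm'
          have htraj' : IsTraj δ₂ S₂ (n + 1) r' m' := by
            intro i hi
            cases i with
            | zero =>
              refine ⟨h0.1, ?_⟩
              show r 0 ∈ δ₂ (c q₀) (l 0)
              rw [hr0]; exact hp'δ
            | succ j =>
              exact hrtraj j (by omega)
          have hreach := entryTime_le_elim δ₂ S₂ H₂ Cs Ct (c q₀) (n + 1) h r' m' rfl htraj'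
          obtain ⟨K, hK, hsafe, htgt⟩ := hreach
          cases K with
          | zero => exact absurd htgt ht
          | succ K' =>
            refine ⟨K', by omega, ?_, htgt⟩
            intro k hk
            exact hsafe (k + 1) (by omega)
        have hE1 : E (c (q 1)) ≤ (n : ℕ∞) :=
          le_trans ((hc (q 1)).2 p' hp'R) hEp'
        obtain ⟨K, hKn, hsafe1, htgt1⟩ :=
          ih (q 1) hE1 (fun i => q (i + 1)) (fun i => l (i + 1)) rfl
            (fun i hi => htraj (i + 1) (by omega))
        refine ⟨K + 1, by omega, ?_, htgt1⟩
        intro k hk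
        cases k with
        | zero =>
          rw [hq0]
          exact pull q₀ (c q₀) Os (hc q₀).1 (safe2 (c q₀) (n + 1) h)
        | succ k' => exact hsafe1 k' (by omega)
  intro N hN q l hq0 htraj
  have hEc : E (c q₁) ≤ (N : ℕ∞) := by
    refine le_trans ?_ hN
    exact le_iInf₂ fun q₂ hq₂ => (hc q₁).2 q₂ hq₂
  exact key N q₁ hEc q l hq0 htraj
end
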